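/- Let t > 0, let γ : [0,t] → ℝ³ be continuous, let ω̄, ω̂ ∈ L²([0,t];ℝ³), let μ be a finite positive Borel measure on [0,t], and let Φ ∈ C¹(ℝ³;ℝ). For ε ∈ ℝ, let γ_{ω̄+εω̂} denote the rotated curve associated with the angular velocity ω̄ + εω̂. Then the map ε ↦ ∫_{[0,t]} Φ( γ_{ω̄+εω̂}(τ) ) dμ(τ) is differentiable at ε = 0, with derivative d/dε |_{ε=0} ∫_{[0,t]} Φ( γ_{ω̄+εω̂}(τ) ) dμ(τ) = − ∫₀^t ⟨ ω̂(σ) , ∫_{[σ,t]} ∇Φ( γ_{ω̄}(τ) ) × ( γ(τ) − γ(σ) ) dμ(τ) ⟩ dσ. -/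

import Mathlib

open MeasureTheory Set Classical
noncomputable section

/-- Three-dimensional Euclidean space. -/
abbrev E3 : Type := EuclideanSpace ℝ (Fin 3)

/-- The cross product on `ℝ³`. -/
def cross (u v : E3) : E3 :=
  WithLp.toLp 2 ![u 1 * v 2 - u 2 * v 1, u 2 * v 0 - u 0 * v 2, u 0 * v 1 - u 1 * v 0]

/-- The Euclidean inner product on `ℝ³`. -/
def rinner (u v : E3) : ℝ := inner ℝ u v

/-- The signed distance to the boundary of `Ω`: negative inside `Ω`, positive outside. -/
def signedDist' (Ω : Set E3) (x : E3) : ℝ :=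
  if x ∈ Ω then -(Metric.infDist x (frontier Ω)) else Metric.infDist x (frontier Ω)

/-- The (unit) outer normal to `Ω`, i.e. the gradient of the signed distance. -/
def outerNormal (Ω : Set E3) (x : E3) : E3 := gradient (signedDist' Ω) x

/-- The set `Ω` has boundary of class `C^k`: near every boundary point, `Ω` is the sublevel
set of a `C^k` defining function with nonvanishing gradient. -/
def HasCkBoundary (Ω : Set E3) (k : ℕ∞) : Prop :=
  ∀ x ∈ frontier Ω, ∃ (U : Set E3) (f : E3 → ℝ), IsOpen U ∧ x ∈ U ∧
    ContDiffOn ℝ k f U ∧ (∀ y ∈ U, gradient f y ≠ 0) ∧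
    Ω ∩ U = {y ∈ U | f y < 0} ∧ frontier Ω ∩ U = {y ∈ U | f y = 0}

/-- `γ`, together with its derivative `γd` and second derivative `γdd`, is a curve of Sobolev
class `H²` on `[0,T]`: `γ` and `γd` are absolutely continuous with the stated derivatives,
and `γdd` is square integrable. -/
def IsH2Curve (T : ℝ) (γ γd γdd : ℝ → E3) : Prop :=
  (∀ s ∈ Icc (0:ℝ) T, γ s = γ 0 + ∫ σ in (0:ℝ)..s, γd σ) ∧
  (∀ s ∈ Icc (0:ℝ) T, γd s = γd 0 + ∫ σ in (0:ℝ)..s, γdd σ) ∧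
  MemLp γdd 2 (volume.restrict (Icc (0:ℝ) T))

/-- The `L²` norm of `ω` on `[0,T]`. -/
def L2norm (T : ℝ) (ω : ℝ → E3) : ℝ := Real.sqrt (∫ s in (0:ℝ)..T, ‖ω s‖ ^ 2)

/-- The `H²` norm of a curve on `[0,T]` (given together with its two derivatives). -/
def H2norm (T : ℝ) (v vd vdd : ℝ → E3) : ℝ :=
  Real.sqrt ((∫ s in (0:ℝ)..T, ‖v s‖ ^ 2) + (∫ s in (0:ℝ)..T, ‖vd s‖ ^ 2) +
    (∫ s in (0:ℝ)..T, ‖vdd s‖ ^ 2))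

/-- Membership in the tube `V_ρ` around the (extended) initial curve `γ₀`:
`γ(0) = 0`, `γ'(0) = γ₀'(0)`, `|γ'| ≡ 1` on `[0,T]`, and `∫₀^T |γ'' − γ₀''|² ≤ ρ`. -/
def InTube (T ρ : ℝ) (γ₀d0 : E3) (γ₀dd : ℝ → E3) (γ γd γdd : ℝ → E3) : Prop :=
  IsH2Curve T γ γd γdd ∧ γ 0 = 0 ∧ γd 0 = γ₀d0 ∧
  (∀ s ∈ Icc (0:ℝ) T, ‖γd s‖ = 1) ∧
  (∫ s in (0:ℝ)..T, ‖γdd s - γ₀dd s‖ ^ 2) ≤ ρ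

/-- The second derivative of the curve `γ₀` extended linearly beyond `t₀`. -/
def extendSecond (t₀ : ℝ) (γ₀dd : ℝ → E3) : ℝ → E3 :=
  fun s => if s ≤ t₀ then γ₀dd s else 0

/-- The rotated curve `γ_ω(s) = γ(s) + ∫₀^s ω(σ) × (γ(s) − γ(σ)) dσ`. -/
def rotCurve (γ ω : ℝ → E3) (s : ℝ) : E3 :=
  γ s + ∫ σ in (0:ℝ)..s, cross (ω σ) (γ s - γ σ)

/-- The elastic cost `J(ω) = ∫₀^T e^{β(t−s)} |ω(s)|² ds`. -/
def Jcost (β t T : ℝ) (ω : ℝ → E3) : ℝ :=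
  ∫ s in (0:ℝ)..T, Real.exp (β * (t - s)) * ‖ω s‖ ^ 2

/-- The maximal depth `E(t,γ,Ω)` at which `γ|_{[0,t]}` penetrates inside `Ω` (zero if it
does not enter `Ω`). -/
def penDepth (t : ℝ) (γ : ℝ → E3) (Ω : Set E3) : ℝ :=
  sSup (insert 0 {d | ∃ s ∈ Icc (0:ℝ) t, γ s ∈ Ω ∧ d = Metric.infDist (γ s) (frontier Ω)})

/-- The breakdown configuration (B): the tip touches the obstacle perpendicularly, and the
curve is straight (a.e.) wherever it does not touch the boundary. -/
def Breakdown (Ω : Set E3) (t₀ : ℝ) (γ γd γdd : ℝ → E3) : Prop :=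
  γ t₀ ∈ frontier Ω ∧ γd t₀ = - outerNormal Ω (γ t₀) ∧
  (∀ᵐ s : ℝ, s ∈ Ioo (0:ℝ) t₀ → γ s ∉ frontier Ω → γdd s = 0)

/-- The linear map `v ↦ w × v`. -/
def crossLM (w : E3) : E3 →ₗ[ℝ] E3 where
  toFun v := cross w v
  map_add' a b := by
    ext i
    fin_cases i <;> simp [cross, PiLp.add_apply] <;> ring
  map_smul' c a := by
    ext i
    fin_cases i <;> simp [cross, PiLp.smul_apply, smul_eq_mul] <;> ring

/-- The continuous linear map `A(w) : v ↦ w × v`. -/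
def crossCLM (w : E3) : E3 →L[ℝ] E3 := LinearMap.toContinuousLinearMap (crossLM w)

/-- The rotation `R[w] = exp(A(w))`, where `A(w)v = w × v`. -/
def rotOf (w : E3) : E3 →L[ℝ] E3 := NormedSpace.exp (crossCLM w)

/-! Because `rotCurve γ ω - γ = crossIntegral γ ω` is linear in `ω`, the perturbed curve
is the line `rotCurve γ ωbar + ε • crossIntegral γ ωhat`. Both terms are continuous on `[0,t]`,
so differentiating under the integral sign gives
`∫ ⟪∇Φ (rotCurve γ ωbar τ), crossIntegral γ ωhat τ⟫ dμ`.
The mixed product `⟪u, v × w⟫ = -⟪v, u × w⟫` brings `ωhat σ` to the front, and Fubini on the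
triangle `0 < σ ≤ τ ≤ t` exchanges the two integrals. -/

def crossBilin : E3 →L[ℝ] E3 →L[ℝ] E3 :=
  LinearMap.toContinuousLinearMap
    { toFun := crossCLM
      map_add' := fun a b => by
        ext v i; fin_cases i <;> simp [crossCLM, crossLM, cross] <;> ring
      map_smul' := fun c a => by
        ext v i; fin_cases i <;> simp [crossCLM, crossLM, cross] <;> ring }

@[simp]
lemma crossBilin_apply (u v : E3) : crossBilin u v = cross u v := rfl

lemma cross_add_smul_left (a b v : E3) (c : ℝ) :
    cross (a + c • b) v = cross a v + c • cross b v := by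
  simp only [← crossBilin_apply, map_add, map_smul]
  rfl

lemma inner_cross_left_comm (u v w : E3) :
    inner ℝ u (cross v w) = -inner ℝ v (cross u w) := by
  simp only [cross, PiLp.inner_apply, RCLike.inner_apply, conj_trivial, Fin.sum_univ_three,
    Matrix.cons_val_zero, Matrix.cons_val_one, Matrix.cons_val_two, Matrix.head_cons,
    Matrix.tail_cons]
  ring

lemma integrableOn_cross_of_continuousOn {X : Type*} [TopologicalSpace X] [T2Space X]
    [MeasurableSpace X] [OpensMeasurableSpace X] {μ : Measure X} {K : Set X} (hK : IsCompact K)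
    {ω γ : X → E3} (hω : IntegrableOn ω K μ) (hγ : ContinuousOn γ K) :
    IntegrableOn (fun x => cross (ω x) (γ x)) K μ := by
  obtain ⟨C, hC⟩ := hK.exists_bound_of_continuousOn hγ
  exact crossBilin.integrable_of_bilin_of_bdd_right C hω
    (hγ.aestronglyMeasurable hK.measurableSet) (ae_restrict_of_forall_mem hK.measurableSet hC)

lemma ContinuousOn.cross {X : Type*} [TopologicalSpace X] {s : Set X} {f g : X → E3}
    (hf : ContinuousOn f s) (hg : ContinuousOn g s) :
    ContinuousOn (fun x => cross (f x) (g x)) s :=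
  crossBilin.continuous₂.comp_continuousOn (hf.prodMk hg)

def crossIntegral (γ ω : ℝ → E3) (s : ℝ) : E3 :=
  ∫ σ in (0:ℝ)..s, cross (ω σ) (γ s - γ σ)

section CrossIntegral

variable {t : ℝ} {γ ω : ℝ → E3}

lemma intervalIntegrable_cross_sub (hγ : ContinuousOn γ (Icc 0 t))
    (hω : IntegrableOn ω (Icc 0 t)) {s : ℝ} (hs : s ∈ Icc 0 t) :
    IntervalIntegrable (fun σ => cross (ω σ) (γ s - γ σ)) volume 0 s := by
  have hsub : Icc 0 s ⊆ Icc 0 t := Icc_subset_Icc le_rfl hs.2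
  rw [intervalIntegrable_iff_integrableOn_Icc_of_le hs.1]
  exact integrableOn_cross_of_continuousOn isCompact_Icc (hω.mono_set hsub)
    (continuousOn_const.sub (hγ.mono hsub))

lemma crossIntegral_add_smul (hγ : ContinuousOn γ (Icc 0 t)) {ω₁ ω₂ : ℝ → E3}
    (hω₁ : IntegrableOn ω₁ (Icc 0 t)) (hω₂ : IntegrableOn ω₂ (Icc 0 t))
    {s : ℝ} (hs : s ∈ Icc 0 t) (ε : ℝ) :
    crossIntegral γ (fun σ => ω₁ σ + ε • ω₂ σ) s =
      crossIntegral γ ω₁ s + ε • crossIntegral γ ω₂ s := by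
  have h₂ : IntervalIntegrable (fun σ => ε • cross (ω₂ σ) (γ s - γ σ)) volume 0 s :=
    (intervalIntegrable_cross_sub hγ hω₂ hs).smul ε
  simp only [crossIntegral, cross_add_smul_left]
  rw [intervalIntegral.integral_add (intervalIntegrable_cross_sub hγ hω₁ hs) h₂,
    intervalIntegral.integral_smul]

lemma rotCurve_add_smul (hγ : ContinuousOn γ (Icc 0 t)) {ω₁ ω₂ : ℝ → E3}
    (hω₁ : IntegrableOn ω₁ (Icc 0 t)) (hω₂ : IntegrableOn ω₂ (Icc 0 t))
    {s : ℝ} (hs : s ∈ Icc 0 t) (ε : ℝ) :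
    rotCurve γ (fun σ => ω₁ σ + ε • ω₂ σ) s = rotCurve γ ω₁ s + ε • crossIntegral γ ω₂ s := by
  change γ s + crossIntegral γ _ s = γ s + crossIntegral γ ω₁ s + _
  rw [crossIntegral_add_smul hγ hω₁ hω₂ hs, add_assoc]

lemma crossIntegral_eq_sub (hγ : ContinuousOn γ (Icc 0 t)) (hω : IntegrableOn ω (Icc 0 t))
    {s : ℝ} (hs : s ∈ Icc 0 t) :
    crossIntegral γ ω s =
      cross (∫ σ in (0:ℝ)..s, ω σ) (γ s) - ∫ σ in (0:ℝ)..s, cross (ω σ) (γ σ) := by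
  have hsub : Icc 0 s ⊆ Icc 0 t := Icc_subset_Icc le_rfl hs.2
  have hcross : ∀ {f : ℝ → E3}, ContinuousOn f (Icc 0 t) →
      IntervalIntegrable (fun σ => cross (ω σ) (f σ)) volume 0 s := fun hf =>
    (intervalIntegrable_iff_integrableOn_Icc_of_le hs.1).2
      (integrableOn_cross_of_continuousOn isCompact_Icc (hω.mono_set hsub) (hf.mono hsub))
  have hωs : IntervalIntegrable ω volume 0 s :=
    (intervalIntegrable_iff_integrableOn_Icc_of_le hs.1).2 (hω.mono_set hsub)
  have hsplit : ∀ σ, cross (ω σ) (γ s - γ σ) = cross (ω σ) (γ s) - cross (ω σ) (γ σ) :=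
    fun σ => map_sub (crossBilin (ω σ)) _ _
  simp only [crossIntegral, hsplit]
  rw [intervalIntegral.integral_sub (hcross continuousOn_const) (hcross hγ)]
  exact congrArg (· - _) ((crossBilin.flip (γ s)).intervalIntegral_comp_comm hωs)

lemma continuousOn_crossIntegral (ht : 0 ≤ t) (hγ : ContinuousOn γ (Icc 0 t))
    (hω : IntegrableOn ω (Icc 0 t)) : ContinuousOn (crossIntegral γ ω) (Icc 0 t) := by
  rw [← uIcc_of_le ht] at hγ hω ⊢
  have hW := intervalIntegral.continuousOn_primitive_interval hω
  have hP := intervalIntegral.continuousOn_primitive_interval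
    (integrableOn_cross_of_continuousOn isCompact_uIcc hω hγ)
  refine ContinuousOn.congr ((hW.cross hγ).sub hP) fun s hs => ?_
  rw [uIcc_of_le ht] at hγ hω hs
  exact crossIntegral_eq_sub hγ hω hs

end CrossIntegral

theorem hasDerivAt_integral_comp_add_smul {α E : Type*} [MeasurableSpace α] {μ : Measure α}
    [IsFiniteMeasure μ] [NormedAddCommGroup E] [NormedSpace ℝ E] [ProperSpace E]
    {Φ : E → ℝ} (hΦ : ContDiff ℝ 1 Φ) {a b : α → E}
    (ha : AEStronglyMeasurable a μ) (hb : AEStronglyMeasurable b μ) {Ca Cb : ℝ}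
    (hCa : ∀ᵐ x ∂μ, ‖a x‖ ≤ Ca) (hCb : ∀ᵐ x ∂μ, ‖b x‖ ≤ Cb) :
    HasDerivAt (fun ε : ℝ => ∫ x, Φ (a x + ε • b x) ∂μ) (∫ x, fderiv ℝ Φ (a x) (b x) ∂μ) 0 := by
  have hΦ' : Continuous (fderiv ℝ Φ) := hΦ.continuous_fderiv one_ne_zero
  obtain ⟨CΦ, hCΦ⟩ := (isCompact_closedBall (0 : E) (Ca + Cb)).exists_bound_of_continuousOn
    hΦ.continuous.continuousOn
  obtain ⟨CΦ', hCΦ'⟩ := (isCompact_closedBall (0 : E) (Ca + Cb)).exists_bound_of_continuousOn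
    hΦ'.continuousOn
  have hball : ∀ᵐ x ∂μ, ∀ ε ∈ Metric.ball (0 : ℝ) 1,
      a x + ε • b x ∈ Metric.closedBall (0 : E) (Ca + Cb) := by
    filter_upwards [hCa, hCb] with x hax hbx ε hε
    rw [mem_closedBall_zero_iff]
    have hε1 : |ε| ≤ 1 := le_of_lt (by simpa using hε)
    calc ‖a x + ε • b x‖ ≤ ‖a x‖ + |ε| * ‖b x‖ := by
          rw [← Real.norm_eq_abs, ← norm_smul]; exact norm_add_le _ _
      _ ≤ Ca + Cb := add_le_add hax ((mul_le_of_le_one_left (norm_nonneg _) hε1).trans hbx)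
  have hmeas : ∀ ε : ℝ, AEStronglyMeasurable (fun x => Φ (a x + ε • b x)) μ := fun ε =>
    hΦ.continuous.comp_aestronglyMeasurable (ha.add (hb.const_smul ε))
  have hint : Integrable (fun x => Φ (a x + (0 : ℝ) • b x)) μ :=
    .of_bound (hmeas 0) CΦ <| hball.mono fun x hx => hCΦ _ (hx 0 (Metric.mem_ball_self one_pos))
  have hF'meas : AEStronglyMeasurable (fun x => fderiv ℝ Φ (a x + (0 : ℝ) • b x) (b x)) μ :=
    (((hΦ'.comp continuous_fst).clm_apply continuous_snd :
      Continuous fun p : E × E => fderiv ℝ Φ p.1 p.2)).comp_aestronglyMeasurable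
      ((ha.add (hb.const_smul (0 : ℝ))).prodMk hb)
  have hbound : ∀ᵐ x ∂μ, ∀ ε ∈ Metric.ball (0 : ℝ) 1,
      ‖fderiv ℝ Φ (a x + ε • b x) (b x)‖ ≤ CΦ' * Cb := by
    filter_upwards [hball, hCb] with x hx hbx ε hε
    have hle := hCΦ' _ (hx ε hε)
    exact (ContinuousLinearMap.le_opNorm _ _).trans
      (mul_le_mul hle hbx (norm_nonneg _) ((norm_nonneg _).trans hle))
  have hderiv : ∀ x, ∀ ε ∈ Metric.ball (0 : ℝ) 1,
      HasDerivAt (fun ε' => Φ (a x + ε' • b x)) (fderiv ℝ Φ (a x + ε • b x) (b x)) ε :=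
    fun x ε _ => ((hΦ.differentiable one_ne_zero _).hasFDerivAt.comp_hasDerivAt ε
      (((hasDerivAt_id ε).smul_const (b x)).const_add (a x))).congr_deriv (by simp)
  simpa using (hasDerivAt_integral_of_dominated_loc_of_deriv_le (Metric.ball_mem_nhds _ one_pos)
    (.of_forall hmeas) hint hF'meas hbound (integrable_const _) (.of_forall hderiv)).2

theorem intervalIntegral_integral_Icc_swap {E : Type*} [NormedAddCommGroup E] [NormedSpace ℝ E]
    (μ : Measure ℝ) [SFinite μ] {t : ℝ} (ht : 0 ≤ t) {F : ℝ → ℝ → E}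
    (hF : IntegrableOn (Function.uncurry F) (Ioc 0 t ×ˢ Icc 0 t) (volume.prod μ)) :
    ∫ σ in (0:ℝ)..t, ∫ τ in Icc σ t, F σ τ ∂μ = ∫ τ in Icc 0 t, (∫ σ in (0:ℝ)..τ, F σ τ) ∂μ := by
  set T : Set (ℝ × ℝ) := {p | p.1 ≤ p.2}
  have hT : MeasurableSet T := measurableSet_le measurable_fst measurable_snd
  rw [IntegrableOn, ← Measure.prod_restrict] at hF
  have hswap := integral_integral_swap (f := fun σ τ => T.indicator (Function.uncurry F) (σ, τ))
    (hF.indicator hT)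
  rw [intervalIntegral.integral_of_le ht]
  calc ∫ σ in Ioc 0 t, ∫ τ in Icc σ t, F σ τ ∂μ
      = ∫ σ in Ioc 0 t, ∫ τ in Icc 0 t, T.indicator (Function.uncurry F) (σ, τ) ∂μ := by
        refine setIntegral_congr_fun measurableSet_Ioc fun σ hσ => ?_
        change _ = ∫ τ in Icc 0 t, (Ici σ).indicator (F σ) τ ∂μ
        have hIcc : Icc 0 t ∩ Ici σ = Icc σ t := by
          ext τ; simp only [mem_inter_iff, mem_Icc, mem_Ici]; grind [hσ.1]
        rw [setIntegral_indicator measurableSet_Ici, hIcc]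
    _ = ∫ τ in Icc 0 t, (∫ σ in Ioc 0 t, T.indicator (Function.uncurry F) (σ, τ)) ∂μ := hswap
    _ = ∫ τ in Icc 0 t, (∫ σ in (0:ℝ)..τ, F σ τ) ∂μ := by
        refine setIntegral_congr_fun measurableSet_Icc fun τ hτ => ?_
        change ∫ σ in Ioc 0 t, (Iic τ).indicator (fun σ => F σ τ) σ = _
        rw [setIntegral_indicator measurableSet_Iic, Ioc_inter_Iic, min_eq_right hτ.2,
          intervalIntegral.integral_of_le hτ.1]

theorem integral_inner_crossIntegral {t : ℝ} (ht : 0 ≤ t) (μ : Measure ℝ) [IsFiniteMeasure μ]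
    {γ G ω : ℝ → E3} (hγ : ContinuousOn γ (Icc 0 t)) (hG : ContinuousOn G (Icc 0 t))
    (hω : IntegrableOn ω (Icc 0 t)) :
    ∫ τ in Icc 0 t, inner ℝ (G τ) (crossIntegral γ ω τ) ∂μ =
      -∫ σ in (0:ℝ)..t, inner ℝ (ω σ) (∫ τ in Icc σ t, cross (G τ) (γ τ - γ σ) ∂μ) := by
  set F : ℝ → ℝ → ℝ := fun σ τ => inner ℝ (ω σ) (cross (G τ) (γ τ - γ σ))
  have hleft : ∀ τ ∈ Icc 0 t,
      inner ℝ (G τ) (crossIntegral γ ω τ) = -∫ σ in (0:ℝ)..τ, F σ τ := by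
    intro τ hτ
    rw [crossIntegral, ← innerSL_apply_apply ℝ, ← (innerSL ℝ (G τ)).intervalIntegral_comp_comm
      (intervalIntegrable_cross_sub hγ hω hτ), ← intervalIntegral.integral_neg]
    exact intervalIntegral.integral_congr fun σ _ => inner_cross_left_comm _ _ _
  have hright : ∀ σ ∈ Ioc 0 t,
      inner ℝ (ω σ) (∫ τ in Icc σ t, cross (G τ) (γ τ - γ σ) ∂μ) = ∫ τ in Icc σ t, F σ τ ∂μ := by
    intro σ hσ
    have hsub : Icc σ t ⊆ Icc 0 t := Icc_subset_Icc hσ.1.le le_rfl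
    exact (integral_inner (((hG.mono hsub).cross ((hγ.mono hsub).sub
      continuousOn_const)).integrableOn_compact isCompact_Icc) _).symm
  have hF : IntegrableOn (Function.uncurry F) (Ioc 0 t ×ˢ Icc 0 t) (volume.prod μ) := by
    have hcross : ContinuousOn (fun p : ℝ × ℝ => cross (G p.2) (γ p.2 - γ p.1))
        (Icc 0 t ×ˢ Icc 0 t) :=
      (hG.comp continuousOn_snd fun p hp => hp.2).cross
        ((hγ.comp continuousOn_snd fun p hp => hp.2).sub
          (hγ.comp continuousOn_fst fun p hp => hp.1))
    obtain ⟨C, hC⟩ := (isCompact_Icc.prod isCompact_Icc).exists_bound_of_continuousOn hcross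
    have hK : Ioc 0 t ×ˢ Icc 0 t ⊆ Icc 0 t ×ˢ Icc (0:ℝ) t :=
      prod_mono Ioc_subset_Icc_self le_rfl
    have hKm : MeasurableSet (Ioc 0 t ×ˢ Icc (0:ℝ) t) :=
      measurableSet_Ioc.prod measurableSet_Icc
    have hωfst : IntegrableOn (fun p : ℝ × ℝ => ω p.1) (Ioc 0 t ×ˢ Icc 0 t) (volume.prod μ) := by
      rw [IntegrableOn, ← Measure.prod_restrict]
      exact (hω.mono_set Ioc_subset_Icc_self).comp_fst _
    exact (innerSL ℝ).integrable_of_bilin_of_bdd_right C hωfst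
      ((hcross.mono hK).aestronglyMeasurable hKm)
      (ae_restrict_of_forall_mem hKm fun p hp => hC p (hK hp))
  calc ∫ τ in Icc 0 t, inner ℝ (G τ) (crossIntegral γ ω τ) ∂μ
      = -∫ τ in Icc 0 t, (∫ σ in (0:ℝ)..τ, F σ τ) ∂μ := by
        rw [← integral_neg]; exact setIntegral_congr_fun measurableSet_Icc hleft
    _ = -∫ σ in (0:ℝ)..t, ∫ τ in Icc σ t, F σ τ ∂μ := by
        rw [intervalIntegral_integral_Icc_swap μ ht hF]
    _ = -∫ σ in (0:ℝ)..t, inner ℝ (ω σ) (∫ τ in Icc σ t, cross (G τ) (γ τ - γ σ) ∂μ) := by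
        rw [intervalIntegral.integral_of_le ht, intervalIntegral.integral_of_le ht,
          setIntegral_congr_fun measurableSet_Ioc hright]

theorem first_variation_obstacle_functional_general
    (t : ℝ) (ht : 0 < t) (γ : ℝ → E3) (hγ : ContinuousOn γ (Icc (0:ℝ) t))
    (ωbar ωhat : ℝ → E3)
    (hωbar : MemLp ωbar 2 (volume.restrict (Icc (0:ℝ) t)))
    (hωhat : MemLp ωhat 2 (volume.restrict (Icc (0:ℝ) t)))
    (μ : Measure ℝ) [IsFiniteMeasure μ]
    (Φ : E3 → ℝ) (hΦ : ContDiff ℝ 1 Φ) :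
    HasDerivAt
      (fun ε : ℝ =>
        ∫ τ in Icc (0:ℝ) t, Φ (rotCurve γ (fun σ => ωbar σ + ε • ωhat σ) τ) ∂μ)
      (-∫ σ in (0:ℝ)..t, rinner (ωhat σ)
          (∫ τ in Icc σ t, cross (gradient Φ (rotCurve γ ωbar τ)) (γ τ - γ σ) ∂μ))
      0 := by
  have hωbar' : IntegrableOn ωbar (Icc 0 t) := hωbar.integrable one_le_two
  have hωhat' : IntegrableOn ωhat (Icc 0 t) := hωhat.integrable one_le_two
  have hA : ContinuousOn (rotCurve γ ωbar) (Icc 0 t) :=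
    hγ.add (continuousOn_crossIntegral ht.le hγ hωbar')
  have hb : ContinuousOn (crossIntegral γ ωhat) (Icc 0 t) :=
    continuousOn_crossIntegral ht.le hγ hωhat'
  obtain ⟨Ca, hCa⟩ := isCompact_Icc.exists_bound_of_continuousOn hA
  obtain ⟨Cb, hCb⟩ := isCompact_Icc.exists_bound_of_continuousOn hb
  have hderiv := hasDerivAt_integral_comp_add_smul (μ := μ.restrict (Icc 0 t)) hΦ
    (hA.aestronglyMeasurable measurableSet_Icc) (hb.aestronglyMeasurable measurableSet_Icc)
    (ae_restrict_of_forall_mem measurableSet_Icc hCa)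
    (ae_restrict_of_forall_mem measurableSet_Icc hCb)
  have hgrad : Continuous (gradient Φ) :=
    (InnerProductSpace.toDual ℝ E3).symm.continuous.comp (hΦ.continuous_fderiv one_ne_zero)
  unfold rinner
  rw [← integral_inner_crossIntegral ht.le μ hγ (G := fun τ => gradient Φ (rotCurve γ ωbar τ))
    (hgrad.comp_continuousOn hA) hωhat']
  refine (hderiv.congr_deriv ?_).congr_of_eventuallyEq (.of_forall fun ε =>
    setIntegral_congr_fun measurableSet_Icc fun τ hτ => ?_)
  · exact integral_congr_ae (.of_forall fun τ => InnerProductSpace.toDual_symm_apply.symm)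
  · rw [rotCurve_add_smul hγ hωbar' hωhat' hτ]

/-- first variation of `ε ↦ ∫ Φ(γ_{ω̄+εω̂}(τ)) dμ(τ)` at `ε = 0`. -/
theorem first_variation_obstacle_functional
    (t : ℝ) (ht : 0 < t) (γ : ℝ → E3) (hγ : ContinuousOn γ (Icc (0:ℝ) t))
    (ωbar ωhat : ℝ → E3)
    (hωbar : MemLp ωbar 2 (volume.restrict (Icc (0:ℝ) t)))
    (hωhat : MemLp ωhat 2 (volume.restrict (Icc (0:ℝ) t)))
    (μ : Measure ℝ) [IsFiniteMeasure μ] (hμsupp : μ ((Icc (0:ℝ) t)ᶜ) = 0)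
    (Φ : E3 → ℝ) (hΦ : ContDiff ℝ 1 Φ) :
    HasDerivAt
      (fun ε : ℝ =>
        ∫ τ in Icc (0:ℝ) t, Φ (rotCurve γ (fun σ => ωbar σ + ε • ωhat σ) τ) ∂μ)
      (-∫ σ in (0:ℝ)..t, rinner (ωhat σ)
          (∫ τ in Icc σ t, cross (gradient Φ (rotCurve γ ωbar τ)) (γ τ - γ σ) ∂μ))
      0 :=
  first_variation_obstacle_functional_general t ht γ hγ ωbar ωhat hωbar hωhat μ Φ hΦ
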